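/- Suppose the intervals I_w of a nested sequence satisfy: for each n ≥ 0 and each E in an interval of level n (which is a band of a polynomial h_{n+1} of degree 2^{n+1} mapped onto [-2,2]) one has |h_k(E)| ≤ 2 for all 1 ≤ k ≤ n+1. Then, using h_{n+1}' = (h_{n-1}² - 2)h_n' + 2h_{n-1}h_n h_{n-1}', there is a constant c > 0 (depending only on the starting band) such that |h_k'(E)| ≤ c·4^k for all such E and all 1 ≤ k ≤ n+1; consequently each level-n interval has length at least c^{-1}·4^{-n}. -/

import Mathlib

/-- Formal derivative of the trace sequence. -/
noncomputable def pdD (h : ℕ → ℝ → ℝ) : ℕ → ℝ → ℝ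
  | 0, _ => 1
  | 1, E => 2 * E
  | (k+2), E => pdD h (k+1) E * ((h k E) ^ 2 - 2)
      + h (k+1) E * (2 * h k E * pdD h k E)

lemma pdD_hasDerivAt (lam : ℝ) (h : ℕ → ℝ → ℝ)
    (h0 : ∀ E, h 0 E = E - lam)
    (h1 : ∀ E, h 1 E = E ^ 2 - lam ^ 2 - 2)
    (hrec : ∀ n : ℕ, ∀ E, h (n + 2) E = h (n + 1) E * ((h n E) ^ 2 - 2) - 2) :
    ∀ k E, HasDerivAt (h k) (pdD h k E) E := by
  intro k
  induction k using Nat.twoStepInduction with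
  | zero =>
    intro E
    have : h 0 = fun x => x - lam := funext h0
    rw [this, pdD]
    exact (hasDerivAt_id E).sub_const lam
  | one =>
    intro E
    have : h 1 = fun x => x ^ 2 - lam ^ 2 - 2 := funext h1
    rw [this, pdD]
    have := ((hasDerivAt_pow 2 E).sub_const (lam ^ 2)).sub_const 2
    convert this using 1
    all_goals (try rfl)
    ring
  | more k ih ih1 =>
    intro E
    have hfun : h (k + 2) = fun x => h (k + 1) x * ((h k x) ^ 2 - 2) - 2 :=
      funext (hrec k)
    rw [hfun, pdD]
    have hd1 : HasDerivAt (fun x => (h k x) ^ 2 - 2) (2 * h k E * pdD h k E) E := by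
      have := ((ih E).pow 2).sub_const 2
      convert this using 1
      all_goals (try rfl)
      ring
    have := ((ih1 E).mul hd1).sub_const 2
    convert this using 1
    all_goals (try rfl)
    try ring

/-- Derivative bound `|h_k'| ≤ c·4^k` on bands where the traces stay bounded
by `2`, and the resulting lower bound `c⁻¹·4⁻ⁿ` on the length of such bands. -/
theorem pd_band_length_lower_bound (lam : ℝ) (hlam : 0 < lam) (h : ℕ → ℝ → ℝ)
    (h0 : ∀ E, h 0 E = E - lam)
    (h1 : ∀ E, h 1 E = E ^ 2 - lam ^ 2 - 2)
    (hrec : ∀ n : ℕ, ∀ E, h (n + 2) E = h (n + 1) E * ((h n E) ^ 2 - 2) - 2) :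
    ∃ c : ℝ, 0 < c ∧
      ∀ (n : ℕ) (x0 x1 : ℝ), x0 < x1 →
        Set.Icc x0 x1 ⊆ Set.Icc lam (Real.sqrt (lam ^ 2 + 4)) →
        (∀ E ∈ Set.Icc x0 x1, ∀ k : ℕ, 1 ≤ k → k ≤ n + 1 → |h k E| ≤ 2) →
        h (n + 1) '' Set.Icc x0 x1 = Set.Icc (-2) 2 →
        (∀ E ∈ Set.Icc x0 x1, ∀ k : ℕ, 1 ≤ k → k ≤ n + 1 →
            |deriv (h k) E| ≤ c * 4 ^ k) ∧
          c⁻¹ * ((4 : ℝ) ^ n)⁻¹ ≤ x1 - x0 := by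
  have HD := pdD_hasDerivAt lam h h0 h1 hrec
  have hderiv : ∀ k E, deriv (h k) E = pdD h k E := fun k E => (HD k E).deriv
  set c : ℝ := lam + 2 with hc
  have hcpos : 0 < c := by positivity
  refine ⟨c, hcpos, ?_⟩
  intro n x0 x1 hx hsub hbd himg
  -- E is bounded by lam + 2 on the big interval
  have hsqrt : Real.sqrt (lam ^ 2 + 4) ≤ lam + 2 := by
    have h1 : Real.sqrt (lam ^ 2 + 4) ≤ Real.sqrt ((lam + 2) ^ 2) :=
      Real.sqrt_le_sqrt (by nlinarith)
    rwa [Real.sqrt_sq (by linarith)] at h1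
  have hEbd : ∀ E ∈ Set.Icc x0 x1, lam ≤ E ∧ E ≤ lam + 2 := by
    intro E hE
    have := hsub hE
    exact ⟨this.1, le_trans this.2 hsqrt⟩
  -- bound on h 0
  have hb0 : ∀ E ∈ Set.Icc x0 x1, |h 0 E| ≤ 2 := by
    intro E hE
    obtain ⟨hl, hr⟩ := hEbd E hE
    rw [h0, abs_le]
    constructor <;> linarith
  -- bound on all h k for k ≤ n+1
  have hball : ∀ E ∈ Set.Icc x0 x1, ∀ k, k ≤ n + 1 → |h k E| ≤ 2 := by
    intro E hE k hk
    rcases Nat.eq_zero_or_pos k with h | h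
    · subst h; exact hb0 E hE
    · exact hbd E hE k h hk
  -- derivative bounds
  have key : ∀ E ∈ Set.Icc x0 x1, ∀ k, k ≤ n + 1 → |pdD h k E| ≤ c * 4 ^ k := by
    intro E hE k
    induction k using Nat.twoStepInduction with
    | zero =>
      intro _
      simp only [pdD, pow_zero, mul_one, abs_one]
      linarith
    | one =>
      intro _
      obtain ⟨hl, hr⟩ := hEbd E hE
      simp only [pdD, pow_one]
      rw [abs_le]
      constructor <;> nlinarith
    | more k ih ih1 =>
      intro hk2
      have hk : k ≤ n + 1 := by omega
      have hk1 : k + 1 ≤ n + 1 := by omega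
      have b0 := hball E hE k hk
      have b1 := hball E hE (k + 1) hk1
      have d0 := ih hk
      have d1 := ih1 hk1
      have hp : |(h k E) ^ 2 - 2| ≤ 2 := by
        rw [abs_le] at b0 ⊢
        constructor <;> nlinarith
      have h4 : (0:ℝ) ≤ 4 ^ k := by positivity
      calc |pdD h (k+2) E|
          ≤ |pdD h (k+1) E * ((h k E) ^ 2 - 2)|
            + |h (k+1) E * (2 * h k E * pdD h k E)| := by
            rw [pdD]; exact abs_add_le _ _
        _ ≤ c * 4 ^ (k+1) * 2 + 2 * (2 * 2 * (c * 4 ^ k)) := by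
            have t2 : |pdD h (k+1) E| * |(h k E) ^ 2 - 2| ≤ c * 4 ^ (k+1) * 2 :=
              mul_le_mul d1 hp (abs_nonneg _) (by positivity)
            have t1 : |h k E| * |pdD h k E| ≤ 2 * (c * 4 ^ k) :=
              mul_le_mul b0 d0 (abs_nonneg _) (by norm_num)
            have t3 : |h (k+1) E| * (2 * (|h k E| * |pdD h k E|)) ≤ 2 * (2 * (2 * (c * 4 ^ k))) :=
              mul_le_mul b1 (by linarith) (by positivity) (by norm_num)
            rw [abs_mul, abs_mul, abs_mul, abs_mul]
            have habs2 : |(2:ℝ)| = 2 := by norm_num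
            rw [habs2]
            nlinarith [t2, t3]
        _ = c * 4 ^ (k+2) := by ring
  have keyd : ∀ E ∈ Set.Icc x0 x1, ∀ k : ℕ, 1 ≤ k → k ≤ n + 1 →
      |deriv (h k) E| ≤ c * 4 ^ k := by
    intro E hE k _ hk
    rw [hderiv]
    exact key E hE k hk
  refine ⟨keyd, ?_⟩
  -- length lower bound via MVT
  have hm2 : (-2 : ℝ) ∈ h (n+1) '' Set.Icc x0 x1 := by
    rw [himg]; constructor <;> norm_num
  have hp2 : (2 : ℝ) ∈ h (n+1) '' Set.Icc x0 x1 := by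
    rw [himg]; constructor <;> norm_num
  obtain ⟨a, ha, hfa⟩ := hm2
  obtain ⟨b, hb, hfb⟩ := hp2
  have hconv : Convex ℝ (Set.Icc x0 x1) := convex_Icc x0 x1
  have hmvt : ‖h (n+1) b - h (n+1) a‖ ≤ c * 4 ^ (n+1) * ‖b - a‖ := by
    apply hconv.norm_image_sub_le_of_norm_hasDerivWithin_le
      (f' := fun x => pdD h (n+1) x)
      (fun x hx => (HD (n+1) x).hasDerivWithinAt) ?_ ha hb
    intro x hx
    rw [Real.norm_eq_abs]
    exact key x hx (n+1) le_rfl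
  rw [hfa, hfb] at hmvt
  have hne : ‖(2:ℝ) - (-2)‖ = 4 := by norm_num
  rw [hne] at hmvt
  have hba : ‖b - a‖ ≤ x1 - x0 := by
    rw [Real.norm_eq_abs, abs_le]
    obtain ⟨hb1, hb2⟩ := hb
    obtain ⟨ha1, ha2⟩ := ha
    constructor <;> linarith
  have h4n : (0:ℝ) < 4 ^ n := by positivity
  have hC : (0:ℝ) < c * 4 ^ (n+1) := by positivity
  have h4le : 4 ≤ c * 4 ^ (n+1) * (x1 - x0) := by
    calc (4:ℝ) ≤ c * 4 ^ (n+1) * ‖b - a‖ := hmvt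
      _ ≤ c * 4 ^ (n+1) * (x1 - x0) := by gcongr
  rw [← mul_inv]
  rw [inv_le_iff_one_le_mul₀ (by positivity)]
  nlinarith [h4le, pow_succ (4:ℝ) n]
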